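/- arXiv:1306.3668 — 2 statements merged into one kernel-verified Lean document; each statement's English description precedes it below -/
import Mathlib

section
/- Let K be a field of characteristic p > 0 with prime field K' = F_p, and let I ⊆ K[x₀,…,x_N] be the ideal of all K'-points of P^N(K) except one point q. Then the smallest degree n such that I_n contains a form not vanishing at q is n = N(p-1) + 1. -/
/-!
Fix a coordinate `i₀` with `q i₀ ≠ 0`. By Fermat's little theorem the form
`X i₀ * ∏_{i ≠ i₀} (X i₀ ^ (p-1) - (q i₀ X i - q i X i₀) ^ (p-1))`, of degree `N(p-1)+1`,
vanishes at every `𝔽_p`-point off the line through `q`, but not at `q`.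
Conversely, let a form `f` of degree `n ≤ N(p-1)` vanish at those points. Then
`g = X i₀ ^ (N(p-1)-n) * f` has degree `N(p-1) < (N+1)(p-1)`, so, as in the proof of the
Chevalley–Warning theorem, `∑_{x ∈ 𝔽_p^{N+1}} g(x) = 0`. Only the points `t • q` contribute, and
they give `∑_t t^{N(p-1)} g(q) = -g(q)`; hence `f(q) = 0`.
-/

open MvPolynomial

/-- The homogeneous ideal of a point of projective space (given by a
representative `π`). -/
noncomputable def pointIdeal {K : Type} [Field K] {n : ℕ} (π : Fin n → K) :
    Ideal (MvPolynomial (Fin n) K) :=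
  Ideal.span {f | (∃ d, f.IsHomogeneous d) ∧ eval π f = 0}

open Finset

theorem FiniteField.sum_pow_eq_neg_one {k : Type*} [Field k] [Fintype k] {n : ℕ}
    (hn : Fintype.card k - 1 ∣ n) (hn0 : n ≠ 0) : ∑ t : k, t ^ n = -1 := by
  classical
  obtain ⟨m, rfl⟩ := hn
  have hpow (t : k) : t ^ ((Fintype.card k - 1) * m) = if t = 0 then 0 else 1 := by
    split_ifs with ht
    · rw [ht, zero_pow hn0]
    · rw [pow_mul, pow_card_sub_one_eq_one t ht, one_pow]
  simp [hpow, sum_ite, filter_ne', Nat.cast_sub Fintype.card_pos]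

theorem MvPolynomial.IsHomogeneous.eval_smul {R σ : Type*} [CommSemiring R] [Fintype σ]
    {f : MvPolynomial σ R} {n : ℕ} (hf : f.IsHomogeneous n) (c : R) (x : σ → R) :
    eval (c • x) f = c ^ n * eval x f := by
  rw [eval_eq', eval_eq', mul_sum]
  refine sum_congr rfl fun d hd => ?_
  have hdeg : ∑ i, d i = n := by
    rw [← Finsupp.degree_eq_sum, Finsupp.degree_eq_weight_one]
    exact hf (mem_support_iff.mp hd)
  simp only [Pi.smul_apply, smul_eq_mul, mul_pow, prod_mul_distrib, prod_pow_eq_pow_sum, hdeg]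
  ring

theorem Fintype.sum_eq_sum_smul_of_support_subset_span {k M K : Type*} [Field k] [Fintype k]
    [AddCommGroup M] [Module k M] [Fintype M] [AddCommMonoid K] {v : M} (hv : v ≠ 0)
    {g : M → K} (hg : Function.support g ⊆ k ∙ v) : ∑ x, g x = ∑ t : k, g (t • v) :=
  (Fintype.sum_of_injective _ (smul_left_injective k hv) _ _
    (fun _ hx => Function.notMem_support.mp fun h => hx (Submodule.mem_span_singleton.mp (hg h)))
    fun _ => rfl).symm

theorem exists_mul_sub_mul_ne_zero_of_notMem_span {σ k : Type*} [Field k] {v x : σ → k} {i₀ : σ}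
    (hi₀ : v i₀ ≠ 0) (hx : x ∉ k ∙ v) : ∃ j, v i₀ * x j - v j * x i₀ ≠ 0 := by
  by_contra! h
  refine hx (Submodule.mem_span_singleton.mpr ⟨x i₀ / v i₀, ?_⟩)
  ext j
  simp only [Pi.smul_apply, smul_eq_mul]
  field_simp
  linear_combination -(h j)

theorem exists_comp_eq_smul_comp_iff {σ k K : Type*} [Field k] [Field K] (φ : k →+* K)
    {v : σ → k} (hv : v ≠ 0) (x : σ → k) : (∃ c : K, φ ∘ x = c • (φ ∘ v)) ↔ x ∈ k ∙ v := by
  rw [Submodule.mem_span_singleton]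
  constructor
  · rintro ⟨c, hc⟩
    obtain ⟨i, hi⟩ := Function.ne_iff.mp hv
    have hφi : φ (v i) ≠ 0 := (map_ne_zero φ).mpr hi
    have hx (j : σ) : φ (x j) = c * φ (v j) := congrFun hc j
    refine ⟨x i / v i, funext fun j => φ.injective ?_⟩
    simp only [Pi.smul_apply, smul_eq_mul, map_mul, map_div₀, hx]
    field_simp
  · rintro ⟨t, rfl⟩
    exact ⟨φ t, by ext; simp⟩

namespace MvPolynomial

section SeparatingForm

variable {σ k : Type*} [Fintype σ] [DecidableEq σ] [Field k] [Fintype k] (v : σ → k) {i₀ : σ}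

noncomputable def separatingForm (i₀ : σ) : MvPolynomial σ k :=
  X i₀ * ∏ i ∈ univ.erase i₀,
    (X i₀ ^ (Fintype.card k - 1) - (C (v i₀) * X i - C (v i) * X i₀) ^ (Fintype.card k - 1))

theorem isHomogeneous_separatingForm (i₀ : σ) :
    (separatingForm v i₀).IsHomogeneous ((Fintype.card σ - 1) * (Fintype.card k - 1) + 1) := by
  have hlin (i : σ) : (C (v i₀) * X i - C (v i) * X i₀ : MvPolynomial σ k).IsHomogeneous 1 :=
    ((isHomogeneous_X k i).C_mul _).sub ((isHomogeneous_X k i₀).C_mul _)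
  have hfactor (i : σ) : (X i₀ ^ (Fintype.card k - 1) - (C (v i₀) * X i - C (v i) * X i₀) ^
      (Fintype.card k - 1)).IsHomogeneous (Fintype.card k - 1) := by
    simpa using ((isHomogeneous_X k i₀).pow _).sub ((hlin i).pow _)
  have hprod := IsHomogeneous.prod (univ.erase i₀) _ _ fun i _ => hfactor i
  rw [separatingForm, add_comm]
  simpa [card_erase_of_mem] using (isHomogeneous_X k i₀).mul hprod

theorem eval_separatingForm_self (hi₀ : v i₀ ≠ 0) : eval v (separatingForm v i₀) ≠ 0 := by
  have hc : Fintype.card k - 1 ≠ 0 := Nat.sub_ne_zero_of_lt Fintype.one_lt_card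
  simp [separatingForm, mul_comm (v i₀), hi₀, zero_pow hc]

theorem eval_separatingForm_eq_zero (hi₀ : v i₀ ≠ 0) {x : σ → k} (hx : x ∉ k ∙ v) :
    eval x (separatingForm v i₀) = 0 := by
  obtain ⟨j, hj⟩ := exists_mul_sub_mul_ne_zero_of_notMem_span hi₀ hx
  have hji₀ : j ≠ i₀ := by rintro rfl; exact hj (by ring)
  rcases eq_or_ne (x i₀) 0 with hxi₀ | hxi₀
  · simp [separatingForm, hxi₀]
  · rw [separatingForm, map_mul, map_prod]
    refine mul_eq_zero_of_right _ (prod_eq_zero (mem_erase.mpr ⟨hji₀, mem_univ j⟩) ?_)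
    simp [FiniteField.pow_card_sub_one_eq_one _ hxi₀, FiniteField.pow_card_sub_one_eq_one _ hj]

end SeparatingForm

section SumOverPoints

variable {σ k K : Type*} [Fintype σ] [Field k] [Fintype k] [CommRing K] (φ : k →+* K)

theorem sum_eval_comp_eq_zero [DecidableEq σ] (f : MvPolynomial σ K)
    (h : f.totalDegree < (Fintype.card k - 1) * Fintype.card σ) :
    ∑ x : σ → k, eval (φ ∘ x) f = 0 := by
  have hmonomial (d : σ →₀ ℕ) (hd : d ∈ f.support) :
      ∑ x : σ → k, eval x (monomial d (1 : k)) = 0 :=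
    sum_eval_eq_zero _ (((totalDegree_monomial_le d 1).trans (le_totalDegree hd)).trans_lt h)
  calc ∑ x : σ → k, eval (φ ∘ x) f
      = ∑ x : σ → k, ∑ d ∈ f.support, coeff d f * φ (eval x (monomial d 1)) := by
        simp [eval_eq', map_prod]
    _ = ∑ d ∈ f.support, coeff d f * φ (∑ x : σ → k, eval x (monomial d 1)) := by
        rw [sum_comm]; simp only [map_sum, mul_sum]
    _ = 0 := sum_eq_zero fun d hd => by rw [hmonomial d hd, map_zero, mul_zero]

theorem sum_eval_comp_smul {g : MvPolynomial σ K} {n : ℕ} (hg : g.IsHomogeneous n)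
    (hn : Fintype.card k - 1 ∣ n) (hn0 : n ≠ 0) (v : σ → k) :
    ∑ t : k, eval (φ ∘ (t • v)) g = -eval (φ ∘ v) g := by
  have hsmul (t : k) : φ ∘ (t • v) = φ t • (φ ∘ v) := by ext; simp
  simp only [hsmul, hg.eval_smul, ← sum_mul, ← map_pow, ← map_sum,
    FiniteField.sum_pow_eq_neg_one hn hn0, map_neg, map_one, neg_one_mul]

theorem IsHomogeneous.eval_comp_eq_zero_of_forall_notMem_span [DecidableEq σ] [Nontrivial σ]
    [IsDomain K] {g : MvPolynomial σ K} {n : ℕ} (hg : g.IsHomogeneous n)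
    (hn : n ≤ (Fintype.card σ - 1) * (Fintype.card k - 1)) {v : σ → k} (hv : v ≠ 0)
    (hvanish : ∀ x ∉ k ∙ v, eval (φ ∘ x) g = 0) : eval (φ ∘ v) g = 0 := by
  obtain ⟨i₀, hi₀⟩ := Function.ne_iff.mp hv
  set D := (Fintype.card σ - 1) * (Fintype.card k - 1)
  have hσ := Fintype.one_lt_card (α := σ)
  have hk := Fintype.one_lt_card (α := k)
  have hD0 : D ≠ 0 := Nat.mul_ne_zero (by omega) (by omega)
  have hDlt : D < (Fintype.card k - 1) * Fintype.card σ := by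
    rw [mul_comm]; exact Nat.mul_lt_mul_of_pos_right (by omega) (by omega)
  have hXg : (X i₀ ^ (D - n) * g).IsHomogeneous D := by
    simpa [Nat.sub_add_cancel hn] using ((isHomogeneous_X K i₀).pow (D - n)).mul hg
  have hsum := sum_eval_comp_eq_zero φ _ (hXg.totalDegree_le.trans_lt hDlt)
  rw [Fintype.sum_eq_sum_smul_of_support_subset_span (k := k) hv,
    sum_eval_comp_smul φ hXg (dvd_mul_left _ _) hD0, neg_eq_zero, map_mul, map_pow, eval_X] at hsum
  · exact (mul_eq_zero.mp hsum).resolve_left (pow_ne_zero _ ((map_ne_zero φ).mpr hi₀))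
  · exact fun x hx => by_contra fun hspan => hx (by simp [hvanish x hspan])

end SumOverPoints

end MvPolynomial

theorem eval_eq_zero_of_mem_pointIdeal {K : Type} [Field K] {n : ℕ} {π : Fin n → K}
    {f : MvPolynomial (Fin n) K} (hf : f ∈ pointIdeal π) : eval π f = 0 :=
  Ideal.span_le (I := RingHom.ker (eval π)) |>.mpr (fun _ hg => hg.2) hf

theorem mem_iInf_pointIdeal_iff {K : Type} [Field K] {n d : ℕ} {S : Set (Fin n → K)}
    {f : MvPolynomial (Fin n) K} (hf : f.IsHomogeneous d) :
    f ∈ ⨅ π ∈ S, pointIdeal π ↔ ∀ π ∈ S, eval π f = 0 := by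
  simp only [Ideal.mem_iInf]
  exact forall₂_congr fun π _ =>
    ⟨eval_eq_zero_of_mem_pointIdeal, fun h => Ideal.subset_span ⟨⟨d, hf⟩, h⟩⟩

theorem range_natCast_eq_range_castHom (p : ℕ) [NeZero p] (K : Type*) [Ring K] [CharP K p] :
    Set.range (Nat.cast : ℕ → K) = Set.range (ZMod.castHom (dvd_refl p) K) := by
  ext a
  constructor
  · rintro ⟨n, rfl⟩
    exact ⟨n, map_natCast _ n⟩
  · rintro ⟨z, rfl⟩
    exact ⟨z.val, ZMod.natCast_val z⟩

theorem stmt11 (p N : ℕ) (hp : p.Prime) (hN : 1 ≤ N)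
    (K : Type) [Field K] [CharP K p]
    (q : Fin (N + 1) → K) (hq : q ≠ 0)
    (hq' : ∀ i, q i ∈ Set.range (Nat.cast : ℕ → K)) :
    -- representatives of the prime-field points of P^N other than q
    let S : Set (Fin (N + 1) → K) :=
      {π | π ≠ 0 ∧ (∀ i, π i ∈ Set.range (Nat.cast : ℕ → K)) ∧
        ¬∃ c : K, π = c • q}
    let I : Ideal (MvPolynomial (Fin (N + 1)) K) := ⨅ π ∈ S, pointIdeal π
    IsLeast {n | ∃ f ∈ I, f.IsHomogeneous n ∧ eval q f ≠ 0}
      (N * (p - 1) + 1) := by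
  intro S I
  have : Fact p.Prime := ⟨hp⟩
  have : Nontrivial (Fin (N + 1)) := Fin.nontrivial_iff_two_le.mpr (by omega)
  set φ := ZMod.castHom (dvd_refl p) K
  have hrange := range_natCast_eq_range_castHom p K
  choose v hv using fun i => hrange ▸ hq' i
  obtain rfl : φ ∘ v = q := funext hv
  have hv0 : v ≠ 0 := by rintro rfl; exact hq (funext fun _ => map_zero φ)
  have hS (x : Fin (N + 1) → ZMod p) : φ ∘ x ∈ S ↔ x ∉ ZMod p ∙ v := by
    rw [← (exists_comp_eq_smul_comp_iff φ hv0 x).not]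
    exact ⟨fun h => h.2.2, fun h => ⟨fun h0 => h ⟨0, by rw [h0, zero_smul]⟩,
      fun i => hrange ▸ ⟨x i, rfl⟩, h⟩⟩
  have hI {f : MvPolynomial (Fin (N + 1)) K} {n : ℕ} (hf : f.IsHomogeneous n) :
      f ∈ I ↔ ∀ x ∉ ZMod p ∙ v, eval (φ ∘ x) f = 0 := by
    rw [mem_iInf_pointIdeal_iff hf]
    refine ⟨fun h x hx => h _ ((hS x).mpr hx), fun h π hπ => ?_⟩
    choose x hx using fun i => hrange ▸ hπ.2.1 i
    obtain rfl : φ ∘ x = π := funext hx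
    exact h x ((hS x).mp hπ)
  have hdeg : (Fintype.card (Fin (N + 1)) - 1) * (Fintype.card (ZMod p) - 1) = N * (p - 1) := by
    simp
  obtain ⟨i₀, hi₀⟩ := Function.ne_iff.mp hv0
  have hF := (isHomogeneous_separatingForm v i₀).map φ
  rw [hdeg] at hF
  refine ⟨⟨_, (hI hF).mpr fun x hx => ?_, hF, ?_⟩, fun n ⟨f, hfI, hf, hfq⟩ => ?_⟩
  · rw [← map_eval, eval_separatingForm_eq_zero v hi₀ hx, map_zero]
  · rw [← map_eval]
    exact (map_ne_zero φ).mpr (eval_separatingForm_self v hi₀)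
  · by_contra! hn
    exact hfq (hf.eval_comp_eq_zero_of_forall_notMem_span φ (by omega) hv0 ((hI hf).mp hfI))
end

section
/- Let K be a field of characteristic p containing F_q with q = p^s, and let I ⊆ K[x₀,x₁,x₂] be the ideal of all F_q-points of P² except q₀ = [0:1:0]. Then α(I) = q + 1, where α(I) denotes the least degree of a nonzero homogeneous element of I; in particular, no nonzero form of degree q vanishes at all the F_q-points other than q₀. -/
/-!
Since `a ^ q = a` on `𝔽_q`, the form `x₀ x₂ ^ q - x₂ x₀ ^ q` of degree `q + 1` vanishes at every
`𝔽_q`-point. Conversely, let `f` be a form of degree `d ≤ q` vanishing at the `𝔽_q`-points other than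
`[0 : 1 : 0]`. Each of the `q²` lines `y = a x + c z` (`a, c ∈ 𝔽_q`) misses `[0 : 1 : 0]`, so `f`
restricts to a binary form of degree `d` with `q + 1 > d` zeros on it, whence
`f (x, a x + c z, z) = 0`. As a polynomial in `y` over `K[x, z]`, `f` then has degree `≤ q < q²` and
the `q²` distinct roots `a x + c z`, so `f = 0`.
-/

open MvPolynomial

open scoped Polynomial

namespace MvPolynomial

lemma natDegree_aeval_le_totalDegree {σ R A : Type*} [CommSemiring R] [CommSemiring A]
    [Algebra R A] {v : σ → A[X]} (hv : ∀ i, (v i).natDegree ≤ 1) (f : MvPolynomial σ R) :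
    (aeval v f).natDegree ≤ f.totalDegree := by
  rw [aeval_def, eval₂_eq]
  refine Polynomial.natDegree_sum_le_of_forall_le _ _ fun m hm => ?_
  refine (Polynomial.natDegree_C_mul_le _ _).trans ((Polynomial.natDegree_prod_le _ _).trans ?_)
  exact (Finset.sum_le_sum fun i _ => Polynomial.natDegree_pow_le_of_le (m i) (hv i)).trans
    (by simp only [mul_one]; exact le_totalDegree hm)

section CommSemiring

variable {R : Type*} [CommSemiring R]

lemma eval_aeval {σ τ : Type*} (x : τ → R) (w : σ → MvPolynomial τ R) (f : MvPolynomial σ R) :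
    eval x (aeval w f) = eval (fun i => eval x (w i)) f := by
  rw [← aeval_eq_eval, comp_aeval_apply]
  rfl

lemma polynomial_eval_aeval {σ : Type*} (t : R) (w : σ → R[X]) (f : MvPolynomial σ R) :
    (aeval w f).eval t = eval (fun i => (w i).eval t) f := by
  rw [← Polynomial.coe_aeval_eq_eval, comp_aeval_apply]
  rfl

lemma _root_.Polynomial.eval_one_zero_homogenize (p : R[X]) (n : ℕ) :
    eval ![1, 0] (p.homogenize n) = p.coeff n := by
  simp only [Polynomial.homogenize, map_sum, eval_monomial]
  rw [Finset.sum_eq_single (n, 0)] <;> aesop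

noncomputable def toPolynomialInX1 : MvPolynomial (Fin 3) R →ₐ[R] (MvPolynomial (Fin 2) R)[X] :=
  aeval ![Polynomial.C (X 0), Polynomial.X, Polynomial.C (X 1)]

lemma toPolynomialInX1_injective : Function.Injective (toPolynomialInX1 (R := R)) := by
  let back : (MvPolynomial (Fin 2) R)[X] →ₐ[R] MvPolynomial (Fin 3) R :=
    Polynomial.aevalTower (rename ![0, 2]) (X 1)
  have h_back : back.comp toPolynomialInX1 = AlgHom.id R _ := by
    ext i
    fin_cases i <;> simp [back, toPolynomialInX1]
  exact Function.LeftInverse.injective (g := back) (AlgHom.congr_fun h_back)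

lemma natDegree_toPolynomialInX1_le (f : MvPolynomial (Fin 3) R) :
    (toPolynomialInX1 f).natDegree ≤ f.totalDegree :=
  natDegree_aeval_le_totalDegree (by simp [Fin.forall_fin_succ, Polynomial.natDegree_X_le]) f

lemma eval_toPolynomialInX1 (r : MvPolynomial (Fin 2) R) (f : MvPolynomial (Fin 3) R) :
    (toPolynomialInX1 f).eval r = aeval ![X 0, r, X 1] f := by
  have h_comp : ((Polynomial.aeval r).restrictScalars R).comp toPolynomialInX1 =
      aeval ![X 0, r, X 1] := by
    ext i
    fin_cases i <;> simp [toPolynomialInX1]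
  exact AlgHom.congr_fun h_comp f

end CommSemiring

theorem IsHomogeneous.eq_zero_of_eval_eq_zero_fin_two {R : Type*} [CommRing R] [IsDomain R]
    {B : MvPolynomial (Fin 2) R} {n : ℕ} (hB : B.IsHomogeneous n) {ι : Type*} [Fintype ι]
    {t : ι → R} (ht : Function.Injective t) (hn : n ≤ Fintype.card ι)
    (h_infty : eval ![1, 0] B = 0) (h_affine : ∀ i, eval ![t i, 1] B = 0) : B = 0 := by
  set p : R[X] := MvPolynomial.aeval ![Polynomial.X, 1] B
  have hpB : p.homogenize n = B := Polynomial.homogenize_eq_of_isHomogeneous hB rfl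
  suffices p = 0 by rw [← hpB, this, Polynomial.homogenize_zero]
  by_contra hp
  have hp_le : p.natDegree ≤ n :=
    (natDegree_aeval_le_totalDegree (by simp [Fin.forall_fin_two]) B).trans hB.totalDegree_le
  have hp_top : p.coeff n = 0 := by rw [← Polynomial.eval_one_zero_homogenize, hpB, h_infty]
  have hp_lt : p.natDegree < n := hp_le.lt_of_ne fun h =>
    hp (Polynomial.leadingCoeff_eq_zero.mp (by rwa [Polynomial.leadingCoeff, h]))
  refine hp (Polynomial.eq_zero_of_natDegree_lt_card_of_eval_eq_zero p ht (fun i => ?_)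
    (hp_lt.trans_le hn))
  rw [polynomial_eval_aeval, ← h_affine i]
  congr 2
  funext j
  fin_cases j <;> simp

theorem IsHomogeneous.eq_zero_of_eval_eq_zero_of_ne_zero_or_ne_zero {K : Type*} [Field K]
    {K' : Subfield K} [Fintype K'] {f : MvPolynomial (Fin 3) K} {d : ℕ} (hf : f.IsHomogeneous d)
    (hd : d ≤ Fintype.card K')
    (hvan : ∀ x ∈ K', ∀ y ∈ K', ∀ z ∈ K', (x ≠ 0 ∨ z ≠ 0) → eval ![x, y, z] f = 0) :
    f = 0 := by
  let line (a c : K') : MvPolynomial (Fin 2) K := C (a : K) * X 0 + C (c : K) * X 1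
  have h_line (a c : K') : MvPolynomial.aeval ![X 0, line a c, X 1] f = 0 := by
    have hw : ∀ i, (![X 0, line a c, X 1] i).IsHomogeneous 1 := by
      intro i
      fin_cases i
      · exact isHomogeneous_X K 0
      · exact (isHomogeneous_C_mul_X _ 0).add (isHomogeneous_C_mul_X _ 1)
      · exact isHomogeneous_X K 1
    have hB := hf.aeval _ hw
    rw [one_mul] at hB
    refine hB.eq_zero_of_eval_eq_zero_fin_two Subtype.val_injective hd ?_ fun t => ?_
    · have h_pt : (fun i => eval ![1, 0] (![X 0, line a c, X 1] i)) = ![1, (a : K), 0] := by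
        funext i
        fin_cases i <;> simp [line]
      rw [eval_aeval, h_pt]
      exact hvan 1 K'.one_mem a a.2 0 K'.zero_mem (.inl one_ne_zero)
    · have h_pt : (fun i => eval ![(t : K), 1] (![X 0, line a c, X 1] i)) =
          ![(t : K), a * t + c, 1] := by
        funext i
        fin_cases i <;> simp [line]
      rw [eval_aeval, h_pt]
      exact hvan t t.2 _ (add_mem (mul_mem a.2 t.2) c.2) 1 K'.one_mem (.inr one_ne_zero)
  have h_inj : Function.Injective fun ac : K' × K' => line ac.1 ac.2 := by
    rintro ⟨a, c⟩ ⟨a', c'⟩ h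
    have h0 := congrArg (eval ![1, 0]) h
    have h1 := congrArg (eval ![0, 1]) h
    simp [line] at h0 h1
    exact Prod.ext h0 h1
  have hq : 1 < Fintype.card K' := Fintype.one_lt_card
  suffices toPolynomialInX1 f = 0 from toPolynomialInX1_injective (this.trans (map_zero _).symm)
  refine Polynomial.eq_zero_of_natDegree_lt_card_of_eval_eq_zero _ h_inj
    (fun ac => (eval_toPolynomialInX1 _ f).trans (h_line ac.1 ac.2)) ?_
  calc (toPolynomialInX1 f).natDegree ≤ d :=
      (natDegree_toPolynomialInX1_le f).trans hf.totalDegree_le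
    _ < Fintype.card (K' × K') := by rw [Fintype.card_prod]; nlinarith

section UpperBound

variable {R σ : Type*} [CommRing R]

lemma isHomogeneous_X_mul_X_pow_sub_X_mul_X_pow (i j : σ) (q : ℕ) :
    (X i * X j ^ q - X j * X i ^ q : MvPolynomial σ R).IsHomogeneous (q + 1) := by
  have h (k l : σ) : (X k * X l ^ q : MvPolynomial σ R).IsHomogeneous (q + 1) := by
    simpa [add_comm] using (isHomogeneous_X R k).mul (isHomogeneous_X_pow l q)
  exact (h i j).sub (h j i)

lemma X_mul_X_pow_sub_X_mul_X_pow_ne_zero [Nontrivial R] {i j : σ} (hij : i ≠ j) {q : ℕ}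
    (hq : q ≠ 1) : (X i * X j ^ q - X j * X i ^ q : MvPolynomial σ R) ≠ 0 := by
  rw [sub_ne_zero, X_pow_eq_monomial, X_pow_eq_monomial, X, X, monomial_mul, monomial_mul]
  intro h
  obtain ⟨h_exp, -⟩ | ⟨h_one, -⟩ := (monomial_eq_monomial_iff _ _ _ _).1 h
  · have := DFunLike.congr_fun h_exp i
    simp [hij] at this
    omega
  · exact one_ne_zero (mul_one (1 : R) ▸ h_one)

end UpperBound

end MvPolynomial

lemma Subfield.pow_card_eq_self {K : Type*} [Field K] {K' : Subfield K} [Fintype K'] {x : K}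
    (hx : x ∈ K') : x ^ Fintype.card K' = x := by
  simpa using congrArg Subtype.val (FiniteField.pow_card (⟨x, hx⟩ : K'))

lemma mem_pointIdeal_iff {K : Type} [Field K] {n : ℕ} {π : Fin n → K}
    {f : MvPolynomial (Fin n) K} {d : ℕ} (hf : f.IsHomogeneous d) :
    f ∈ pointIdeal π ↔ eval π f = 0 :=
  ⟨fun h => (Ideal.span_le (I := RingHom.ker (eval π)) |>.2 fun _ hg => hg.2) h,
    fun h => Ideal.subset_span ⟨⟨d, hf⟩, h⟩⟩

theorem stmt18_general (p s : ℕ)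
    (K : Type) [Field K] (K' : Subfield K) [Fintype K']
    (hcard : Fintype.card K' = p ^ s) :
    let q0 : Fin 3 → K := fun i => if i = 1 then 1 else 0
    let S : Set (Fin 3 → K) :=
      {π | π ≠ 0 ∧ (∀ i, π i ∈ K') ∧ ¬∃ c : K, π = c • q0}
    let I : Ideal (MvPolynomial (Fin 3) K) := ⨅ π ∈ S, pointIdeal π
    -- α(I) = q + 1
    IsLeast {d | ∃ f ∈ I, f ≠ 0 ∧ f.IsHomogeneous d} (p ^ s + 1) := by
  intro q0 S I
  rw [← hcard]
  have h_mem {f : MvPolynomial (Fin 3) K} {d : ℕ} (hf : f.IsHomogeneous d) :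
      f ∈ I ↔ ∀ π ∈ S, eval π f = 0 := by
    simp only [I, Ideal.mem_iInf, mem_pointIdeal_iff hf]
  have h_hom := isHomogeneous_X_mul_X_pow_sub_X_mul_X_pow (R := K) (0 : Fin 3) 2 (Fintype.card K')
  constructor
  · refine ⟨X 0 * X 2 ^ Fintype.card K' - X 2 * X 0 ^ Fintype.card K',
      (h_mem h_hom).2 fun π hπ => ?_,
      X_mul_X_pow_sub_X_mul_X_pow_ne_zero (by decide) Fintype.one_lt_card.ne', h_hom⟩
    simp [Subfield.pow_card_eq_self (hπ.2.1 _), mul_comm]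
  rintro d ⟨f, hfI, hf0, hf⟩
  by_contra! hd
  have h_S {π : Fin 3 → K} (hK' : ∀ i, π i ∈ K') (hπ : π 0 ≠ 0 ∨ π 2 ≠ 0) : π ∈ S :=
    ⟨fun h => by simp [h] at hπ, hK', fun ⟨c, hc⟩ => by simp [hc, q0] at hπ⟩
  refine hf0 (hf.eq_zero_of_eval_eq_zero_of_ne_zero_or_ne_zero (K' := K') (by omega)
    fun x hx y hy z hz hxz => (h_mem hf).1 hfI _ (h_S ?_ hxz))
  simp [Fin.forall_fin_succ, hx, hy, hz]

theorem stmt18 (p s : ℕ) (hp : p.Prime) (hs : 1 ≤ s)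
    (K : Type) [Field K] [CharP K p] (K' : Subfield K) [Fintype K']
    (hcard : Fintype.card K' = p ^ s) :
    let q0 : Fin 3 → K := fun i => if i = 1 then 1 else 0
    let S : Set (Fin 3 → K) :=
      {π | π ≠ 0 ∧ (∀ i, π i ∈ K') ∧ ¬∃ c : K, π = c • q0}
    let I : Ideal (MvPolynomial (Fin 3) K) := ⨅ π ∈ S, pointIdeal π
    -- α(I) = q + 1
    IsLeast {d | ∃ f ∈ I, f ≠ 0 ∧ f.IsHomogeneous d} (p ^ s + 1) :=
  stmt18_general p s K K' hcard
end
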